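/- Let k ≥ 1, T ∈ Tab(2,k) and a ∈ ℂ∖{0}. The monomial m^{(2)}_{T,a} is dominant (all its exponents are ≥ 0) if and only if T_{1,p} = 1 and T_{2,p} = 2 for all 1 ≤ p ≤ k, in which case m^{(2)}_{T,a} = ∏_{p=1}^{k} Z_{2,a³q^{6p−9}}. Consequently the sum Σ_{T∈Tab(2,k)} m^{(2)}_{T,a} ∈ ℤ[G] has a unique dominant monomial, occurring with coefficient 1 (the Kirillov–Reshetikhin module W^{(2)}_{k,a} of type D_4^{(3)} is special). -/

import Mathlib

noncomputable section

/-- The set `B = {1,2,3,4,4̄,3̄,2̄,1̄}`. -/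
inductive BB : Type
  | b1 | b2 | b3 | b4 | b4' | b3' | b2' | b1'
  deriving DecidableEq

instance : Fintype BB where
  elems := {.b1, .b2, .b3, .b4, .b4', .b3', .b2', .b1'}
  complete := by intro x; cases x <;> decide

/-- The rank used to define the partial order on `B`
(`4` and `4̄` get the same rank, making them incomparable). -/
def BB.rank : BB → ℕ
  | .b1 => 0 | .b2 => 1 | .b3 => 2 | .b4 => 3 | .b4' => 3
  | .b3' => 4 | .b2' => 5 | .b1' => 6

/-- The partial order `⪯` on `B` : `1 ≺ 2 ≺ 3 ≺ 4 ≺ 3̄ ≺ 2̄ ≺ 1̄` and `3 ≺ 4̄ ≺ 3̄`,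
with `4` and `4̄` incomparable. -/
def BB.le (x y : BB) : Prop := x = y ∨ x.rank < y.rank

/-- The strict order `≺` on `B`. -/
def BB.lt (x y : BB) : Prop := x.rank < y.rank

/-- Monomials: the free abelian group on `{1,2} × ℂˣ`, written additively;
`Finsupp.single (i,b) 1` corresponds to the generator `Z_{i+1,b}`. -/
abbrev Mon2 : Type := (Fin 2 × ℂˣ) →₀ ℤ

/-- The group ring `ℤ[G]`. -/
abbrev LR2 : Type := AddMonoidAlgebra ℤ Mon2

/-- The generator `Z_{i,b}` (with `i : Fin 2` indexing `{1,2}`). -/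
def Zv (i : Fin 2) (b : ℂˣ) : Mon2 := Finsupp.single (i, b) 1

/-- `j = e^{2iπ/3}`, a primitive cube root of unity, as a unit of `ℂ`. -/
def jC : ℂˣ := Units.mk0 (Complex.exp (2 * Real.pi * Complex.I / 3)) (Complex.exp_ne_zero _)

/-- The boxes `⟦α⟧_a ∈ G` for `α ∈ B` (written additively). -/
def box (q : ℂˣ) : BB → ℂˣ → Mon2
  | .b1, a => Zv 0 a
  | .b2, a => -Zv 0 (a * q ^ 2) + Zv 1 (a ^ 3 * q ^ 3)
  | .b3, a => -Zv 1 (a ^ 3 * q ^ 9) + Zv 0 (a * q ^ 2 * jC) + Zv 0 (a * q ^ 2 * jC ^ 2)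
  | .b4, a => Zv 0 (a * q ^ 2 * jC) - Zv 0 (a * q ^ 4 * jC ^ 2)
  | .b4', a => Zv 0 (a * q ^ 2 * jC ^ 2) - Zv 0 (a * q ^ 4 * jC)
  | .b3', a => -Zv 0 (a * q ^ 4 * jC) - Zv 0 (a * q ^ 4 * jC ^ 2) + Zv 1 (a ^ 3 * q ^ 9)
  | .b2', a => Zv 0 (a * q ^ 4) - Zv 1 (a ^ 3 * q ^ 15)
  | .b1', a => -Zv 0 (a * q ^ 6)

/-- `Tab(1,k)`: sequences `(T_1,…,T_k)` in `B` with `T_p ⪯ T_{p+1}`. -/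
def IsTab1 (k : ℕ) (T : Fin k → BB) : Prop :=
  ∀ (p : ℕ) (h : p + 1 < k), BB.le (T ⟨p, Nat.lt_of_succ_lt h⟩) (T ⟨p + 1, h⟩)

/-- The monomial `m^{(1)}_{T,a} = ∏_{p=1}^{k} ⟦T_p⟧_{aq^{2(p-1)}}` (written additively). -/
def m1 (q : ℂˣ) {k : ℕ} (T : Fin k → BB) (a : ℂˣ) : Mon2 :=
  ∑ p : Fin k, box q (T p) (a * q ^ (2 * (p : ℕ)))

/-- `Tab(2,k)`: two-row arrays with entries in `B` satisfying (θ1)–(θ4).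
Row `i : Fin 2` corresponds to row `i+1` of the paper. -/
def IsTab2 (k : ℕ) (T : Fin 2 → Fin k → BB) : Prop :=
  (∀ i : Fin 2, IsTab1 k (T i)) ∧
  (∀ p : Fin k, ¬ BB.le (T 1 p) (T 0 p)) ∧
  (¬ ∃ p p' : Fin k, p < p' ∧
      (∀ r : Fin k, p ≤ r → r < p' → T 0 r = BB.b3) ∧ T 0 p' = BB.b4 ∧
      T 1 p = BB.b4 ∧ (∀ r : Fin k, p < r → r ≤ p' → T 1 r = BB.b3')) ∧
  (¬ ∃ p p' : Fin k, p < p' ∧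
      (∀ r : Fin k, p ≤ r → r < p' → T 0 r = BB.b3) ∧ T 0 p' = BB.b4' ∧
      T 1 p = BB.b4' ∧ (∀ r : Fin k, p < r → r ≤ p' → T 1 r = BB.b3'))

/-- The monomial `m^{(2)}_{T,a} = ∏_{i∈{1,2}} ∏_{p=1}^{k} ⟦T_{i,p}⟧_{aq^{2(p-i)}}`
(written additively; rows and columns are 0-indexed). -/
def m2 (q : ℂˣ) {k : ℕ} (T : Fin 2 → Fin k → BB) (a : ℂˣ) : Mon2 :=
  ∑ i : Fin 2, ∑ p : Fin k, box q (T i p) (a * q ^ (2 * ((p : ℤ) - (i : ℤ))))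

open Classical in
/-- `S²_k(a) = Σ_{T ∈ Tab(2,k)} m^{(2)}_{T,a}` in the group ring `ℤ[G]`. -/
def S2 (q : ℂˣ) (k : ℕ) (a : ℂˣ) : LR2 :=
  ∑ T : Fin 2 → Fin k → BB, if IsTab2 k T then AddMonoidAlgebra.single (m2 q T a) 1 else 0


/-!
Write `Z_{1, a q^M j^E}` and `Z_{2, a³ q^M}` by their exponents `(M, E)` and `M`: as `q` is not a
root of unity these generators are pairwise distinct, so dominance can be read off exponent
vectors, and we give the generators the levels `3M` and `M`. Every box `⟦β⟧_{aq^u}` with `β ≠ 1`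
contains a variable with negative exponent at level `3u + δ(β)`, strictly above all its variables
with positive exponent, and `δ` is monotone for `⪯` (with `δ(1)` chosen so that the bound also holds
for `⟦1⟧`). Along a row of a tableau these levels increase, so the highest level occurs in the last
column, and unless that column is `(1, 2)` it is attained by a box `≠ 1`; no box can compensate
that negative variable, so `m^{(2)}_{T,a}` is not dominant. A last column `(1, 2)` forces all
columns to be `(1, 2)` by monotonicity of the rows.
-/

open Finsupp

lemma finsetSum_apply_neg_of_pos_level_lt {ι X Λ M : Type*} [LinearOrder Λ] [AddCommMonoid M]
    [LinearOrder M] [IsOrderedCancelAddMonoid M] {s : Finset ι} {f : ι → X →₀ M}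
    (level : X → Λ) (w : ι → Λ) (hpos : ∀ b ∈ s, ∀ c, 0 < f b c → level c < w b)
    {b₀ : ι} (hb₀ : b₀ ∈ s) {c₀ : X} (hneg : f b₀ c₀ < 0) (hmax : ∀ b ∈ s, w b ≤ level c₀) :
    (∑ b ∈ s, f b) c₀ < 0 := by
  rw [finsetSum_apply]
  calc ∑ b ∈ s, f b c₀ < ∑ _b ∈ s, 0 :=
        Finset.sum_lt_sum (fun b hb => not_lt.1 fun h => (hpos b hb c₀ h).not_ge (hmax b hb))
          ⟨b₀, hb₀, hneg⟩
    _ = 0 := Finset.sum_const_zero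

lemma jC_isPrimitiveRoot : IsPrimitiveRoot jC 3 := by
  rw [← IsPrimitiveRoot.coe_units_iff]
  simpa [jC, mul_div_assoc] using Complex.isPrimitiveRoot_exp 3 (by norm_num)

/-- `Sum.inl (M, E)` stands for the generator `Z_{1, a q^M j^E}` and `Sum.inr M` for
`Z_{2, a³ q^M}`, via `coordEmb q a`. -/
abbrev Coord : Type := (ℤ × Fin 3) ⊕ ℤ

def coordEmb (q a : ℂˣ) : Coord → Fin 2 × ℂˣ
  | .inl (M, E) => (0, a * q ^ M * jC ^ (E : ℕ))
  | .inr M => (1, a ^ 3 * q ^ M)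

lemma coordEmb_injective {q : ℂˣ} (hq : ∀ n : ℕ, 0 < n → (q : ℂ) ^ n ≠ 1) (a : ℂˣ) :
    Function.Injective (coordEmb q a) := by
  have hinj : Function.Injective (fun n : ℤ => q ^ n) := by
    rw [injective_zpow_iff_not_isOfFinOrder, isOfFinOrder_iff_pow_eq_one]
    rintro ⟨n, hn, h⟩
    exact hq n hn (by simpa using congrArg Units.val h)
  rintro (⟨M, E⟩ | M) (⟨M', E'⟩ | M') h <;>
    simp only [coordEmb, Prod.mk.injEq, mul_assoc, mul_right_inj] at h
  · obtain ⟨-, h⟩ := h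
    have hcube (M : ℤ) (E : ℕ) : (q ^ M * jC ^ E) ^ 3 = q ^ (3 * M) := by
      rw [mul_pow, ← pow_mul, mul_comm E, pow_mul, jC_isPrimitiveRoot.pow_eq_one, one_pow,
        mul_one, mul_comm, zpow_mul, zpow_ofNat]
    have hM : M = M' := by
      have := congrArg (· ^ 3) h
      simp only [hcube] at this
      simpa using hinj this
    subst hM
    rw [mul_right_inj] at h
    rw [Fin.ext (jC_isPrimitiveRoot.pow_inj E.isLt E'.isLt h)]
  · exact absurd h.1 (by decide)
  · exact absurd h.1 (by decide)
  · rw [hinj h.2]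

def coordMap (q a : ℂˣ) : (Coord →₀ ℤ) →+ Mon2 := mapDomain.addMonoidHom (coordEmb q a)

lemma coordMap_single (q a : ℂˣ) (c : Coord) (n : ℤ) :
    coordMap q a (single c n) = single (coordEmb q a c) n :=
  mapDomain_single

lemma nonneg_of_coordMap_nonneg {q : ℂˣ} (hq : ∀ n : ℕ, 0 < n → (q : ℂ) ^ n ≠ 1) {a : ℂˣ}
    {f : Coord →₀ ℤ} (h : ∀ lb, 0 ≤ coordMap q a f lb) (c : Coord) : 0 ≤ f c := by
  simpa [coordMap, mapDomain_apply (coordEmb_injective hq a)] using h (coordEmb q a c)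

/-- The `q`-exponent of the cube of the spectral parameter, up to the factor `a³`. -/
def Coord.level : Coord → ℤ
  | .inl (M, _) => 3 * M
  | .inr M => M

def boxExp : BB → ℤ → Coord →₀ ℤ
  | .b1, u => single (.inl (u, 0)) 1
  | .b2, u => -single (.inl (u + 2, 0)) 1 + single (.inr (3 * u + 3)) 1
  | .b3, u => -single (.inr (3 * u + 9)) 1 + single (.inl (u + 2, 1)) 1 + single (.inl (u + 2, 2)) 1
  | .b4, u => single (.inl (u + 2, 1)) 1 - single (.inl (u + 4, 2)) 1
  | .b4', u => single (.inl (u + 2, 2)) 1 - single (.inl (u + 4, 1)) 1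
  | .b3', u =>
    -single (.inl (u + 4, 1)) 1 - single (.inl (u + 4, 2)) 1 + single (.inr (3 * u + 9)) 1
  | .b2', u => single (.inl (u + 4, 0)) 1 - single (.inr (3 * u + 15)) 1
  | .b1', u => -single (.inl (u + 6, 0)) 1

lemma coordMap_boxExp (q a : ℂˣ) (β : BB) (u : ℤ) :
    coordMap q a (boxExp β u) = box q β (a * q ^ u) := by
  cases β <;>
    simp [boxExp, box, coordMap_single, coordEmb, Zv, zpow_add, mul_assoc, mul_pow,
      mul_comm (3 : ℤ), zpow_mul]

def m2Exp {k : ℕ} (T : Fin 2 → Fin k → BB) : Coord →₀ ℤ :=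
  ∑ i : Fin 2, ∑ p : Fin k, boxExp (T i p) (2 * ((p : ℤ) - (i : ℤ)))

lemma coordMap_m2Exp (q a : ℂˣ) {k : ℕ} (T : Fin 2 → Fin k → BB) :
    coordMap q a (m2Exp T) = m2 q T a := by
  simp only [m2Exp, m2, map_sum, coordMap_boxExp]

/-- For `β ≠ 1`, `3u + β.topLevel` is the level of the highest variable with negative exponent
in `⟦β⟧_{aq^u}`. -/
def BB.topLevel : BB → ℤ
  | .b1 => 3 | .b2 => 6 | .b3 => 9 | .b4 => 12 | .b4' => 12
  | .b3' => 12 | .b2' => 15 | .b1' => 18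

lemma BB.topLevel_mono {x y : BB} (h : x.rank ≤ y.rank) : x.topLevel ≤ y.topLevel := by
  cases x <;> cases y <;> simp_all [BB.rank, BB.topLevel]

lemma level_lt_of_boxExp_pos {β : BB} {u : ℤ} {c : Coord} (h : 0 < boxExp β u c) :
    c.level < 3 * u + β.topLevel := by
  cases β <;> rcases c with ⟨M, E⟩ | M <;>
    simp only [boxExp, coe_add, coe_neg, coe_sub, Pi.add_apply, Pi.neg_apply, Pi.sub_apply,
      single_apply] at h <;>
    split_ifs at h <;> simp_all [Coord.level, BB.topLevel] <;> omega

lemma exists_boxExp_neg {β : BB} (hβ : β ≠ .b1) (u : ℤ) :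
    ∃ c : Coord, c.level = 3 * u + β.topLevel ∧ boxExp β u c < 0 := by
  cases β
  · exact absurd rfl hβ
  · exact ⟨.inl (u + 2, 0), by simp [Coord.level, BB.topLevel]; ring, by simp [boxExp]⟩
  · exact ⟨.inr (3 * u + 9), rfl, by simp [boxExp]⟩
  · exact ⟨.inl (u + 4, 2), by simp [Coord.level, BB.topLevel]; ring, by simp [boxExp]⟩
  · exact ⟨.inl (u + 4, 1), by simp [Coord.level, BB.topLevel]; ring, by simp [boxExp]⟩
  · exact ⟨.inl (u + 4, 1), by simp [Coord.level, BB.topLevel]; ring, by simp [boxExp]⟩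
  · exact ⟨.inr (3 * u + 15), rfl, by simp [boxExp]⟩
  · exact ⟨.inl (u + 6, 0), by simp [Coord.level, BB.topLevel]; ring, by simp [boxExp]⟩

lemma BB.rank_le_of_le {x y : BB} (h : BB.le x y) : x.rank ≤ y.rank :=
  h.elim (fun h => h ▸ le_rfl) le_of_lt

lemma IsTab1.rank_monotone {k : ℕ} {T : Fin k → BB} (h : IsTab1 k T) :
    Monotone (BB.rank ∘ T) := by
  cases k with
  | zero => exact fun p => p.elim0
  | succ n => exact Fin.monotone_iff_le_succ.2 fun p => BB.rank_le_of_le (h p (by omega))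

lemma BB.exists_top_of_column {x y : BB} (hxy : ¬ BB.le y x) (hstd : ¬(x = .b1 ∧ y = .b2)) :
    (x ≠ .b1 ∧ y.topLevel ≤ x.topLevel + 6) ∨ (y ≠ .b1 ∧ x.topLevel + 6 ≤ y.topLevel) := by
  cases x <;> cases y <;> simp_all [BB.le, BB.rank, BB.topLevel]

lemma BB.column_eq_of_rank_le {x y : BB} (hx : x.rank ≤ 0) (hy : y.rank ≤ 1)
    (hxy : ¬ BB.le y x) : x = .b1 ∧ y = .b2 := by
  cases x <;> cases y <;> simp_all [BB.le, BB.rank]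

lemma IsTab2.lastColumn_eq_of_m2Exp_nonneg {n : ℕ} {T : Fin 2 → Fin (n + 1) → BB}
    (hT : IsTab2 (n + 1) T) (hdom : ∀ c, 0 ≤ m2Exp T c) :
    T 0 (Fin.last n) = .b1 ∧ T 1 (Fin.last n) = .b2 := by
  by_contra hstd
  let w : Fin 2 × Fin (n + 1) → ℤ := fun b => 3 * (2 * (b.2 - b.1)) + (T b.1 b.2).topLevel
  have hrow (i : Fin 2) (p : Fin (n + 1)) : w (i, p) ≤ w (i, Fin.last n) := by
    have hp : (p : ℤ) ≤ n := by exact_mod_cast Fin.le_last p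
    have := BB.topLevel_mono ((hT.1 i).rank_monotone (Fin.le_last p))
    simp only [w, Fin.val_last]
    omega
  obtain ⟨i₀, hi₀, hmax⟩ : ∃ i₀, T i₀ (Fin.last n) ≠ .b1 ∧
      ∀ i, w (i, Fin.last n) ≤ w (i₀, Fin.last n) := by
    rcases BB.exists_top_of_column (hT.2.1 (Fin.last n)) hstd with ⟨hne, hle⟩ | ⟨hne, hle⟩
    · exact ⟨0, hne, fun i => by fin_cases i <;> simp [w]; omega⟩
    · exact ⟨1, hne, fun i => by fin_cases i <;> simp [w]; omega⟩
  obtain ⟨c₀, hlevel, hneg⟩ := exists_boxExp_neg hi₀ (2 * ((Fin.last n : ℤ) - (i₀ : ℤ)))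
  have := finsetSum_apply_neg_of_pos_level_lt (s := Finset.univ)
    (f := fun b : Fin 2 × Fin (n + 1) => boxExp (T b.1 b.2) (2 * ((b.2 : ℤ) - (b.1 : ℤ))))
    Coord.level w (fun b _ c hc => level_lt_of_boxExp_pos hc) (Finset.mem_univ (i₀, Fin.last n))
    hneg (fun b _ => (hrow b.1 b.2).trans ((hmax b.1).trans hlevel.ge))
  rw [Fintype.sum_prod_type] at this
  exact (hdom c₀).not_gt this

def stdTab (k : ℕ) : Fin 2 → Fin k → BB := ![fun _ => .b1, fun _ => .b2]

lemma eq_stdTab_iff {k : ℕ} {T : Fin 2 → Fin k → BB} :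
    T = stdTab k ↔ ∀ p, T 0 p = .b1 ∧ T 1 p = .b2 := by
  constructor
  · rintro rfl p
    exact ⟨rfl, rfl⟩
  · intro h
    funext i p
    fin_cases i
    exacts [(h p).1, (h p).2]

lemma IsTab2.eq_stdTab_of_m2Exp_nonneg {k : ℕ} {T : Fin 2 → Fin k → BB} (hT : IsTab2 k T)
    (hdom : ∀ c, 0 ≤ m2Exp T c) : T = stdTab k := by
  refine eq_stdTab_iff.2 fun p => ?_
  obtain ⟨n, rfl⟩ := Nat.exists_eq_add_one_of_ne_zero p.pos.ne'
  obtain ⟨h0, h1⟩ := hT.lastColumn_eq_of_m2Exp_nonneg hdom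
  have r0 := (hT.1 0).rank_monotone (Fin.le_last p)
  have r1 := (hT.1 1).rank_monotone (Fin.le_last p)
  simp only [Function.comp_apply, h0, h1, BB.rank] at r0 r1
  exact BB.column_eq_of_rank_le r0 r1 (hT.2.1 p)

lemma isTab2_stdTab (k : ℕ) : IsTab2 k (stdTab k) := by
  refine ⟨fun i p hp => ?_, fun p => ?_, ?_, ?_⟩
  · fin_cases i <;> exact Or.inl rfl
  · simp [stdTab, BB.le, BB.rank]
  · simp [stdTab]
  · simp [stdTab]

lemma m2Exp_stdTab (k : ℕ) :
    m2Exp (stdTab k) = ∑ p : Fin k, single (.inr (6 * (p : ℤ) - 3)) 1 := by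
  rw [m2Exp, Fin.sum_univ_two, ← Finset.sum_add_distrib]
  refine Finset.sum_congr rfl fun p _ => ?_
  simp only [stdTab, boxExp, Matrix.cons_val_zero, Matrix.cons_val_one, Fin.isValue, Fin.val_zero,
    Fin.val_one, Nat.cast_zero, Nat.cast_one]
  rw [show 2 * ((p : ℤ) - 1) + 2 = 2 * ((p : ℤ) - 0) by ring,
    show 3 * (2 * ((p : ℤ) - 1)) + 3 = 6 * p - 3 by ring, add_neg_cancel_left]

lemma m2_stdTab (q : ℂˣ) (k : ℕ) (a : ℂˣ) :
    m2 q (stdTab k) a = ∑ p : Fin k, Zv 1 (a ^ 3 * q ^ (6 * (p : ℤ) - 3)) := by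
  rw [← coordMap_m2Exp, m2Exp_stdTab, map_sum]
  simp only [coordMap_single, coordEmb, Zv]

lemma m2_stdTab_nonneg (q : ℂˣ) (k : ℕ) (a : ℂˣ) (lb : Fin 2 × ℂˣ) :
    0 ≤ m2 q (stdTab k) a lb := by
  rw [m2_stdTab, finsetSum_apply]
  exact Finset.sum_nonneg fun p _ => single_nonneg.2 zero_le_one lb

open Classical in
lemma coeff_S2 (q : ℂˣ) (k : ℕ) (a : ℂˣ) (m : Mon2) :
    (S2 q k a).coeff m = (Finset.univ.filter fun T => IsTab2 k T ∧ m2 q T a = m).card := by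
  rw [S2, AddMonoidAlgebra.coeff_sum, finsetSum_apply, Finset.card_filter, Nat.cast_sum]
  refine Finset.sum_congr rfl fun T _ => ?_
  by_cases hT : IsTab2 k T <;> by_cases hm : m2 q T a = m <;>
    simp [hT, hm, AddMonoidAlgebra.coeff_single]

theorem W2_special_general (q : ℂˣ) (hq : ∀ n : ℕ, 0 < n → (q : ℂ) ^ n ≠ 1)
    (k : ℕ) (a : ℂˣ) :
    (∀ T : Fin 2 → Fin k → BB, IsTab2 k T →
      (((∀ lb : Fin 2 × ℂˣ, 0 ≤ (m2 q T a) lb) ↔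
          ∀ p : Fin k, T 0 p = BB.b1 ∧ T 1 p = BB.b2) ∧
        ((∀ p : Fin k, T 0 p = BB.b1 ∧ T 1 p = BB.b2) →
          m2 q T a = ∑ p : Fin k, Zv 1 (a ^ 3 * q ^ (6 * (p : ℤ) - 3)))))
    ∧ (S2 q k a).coeff (∑ p : Fin k, Zv 1 (a ^ 3 * q ^ (6 * (p : ℤ) - 3))) = 1
    ∧ (∀ m : Mon2, (S2 q k a).coeff m ≠ 0 → (∀ lb : Fin 2 × ℂˣ, 0 ≤ m lb) →
        m = ∑ p : Fin k, Zv 1 (a ^ 3 * q ^ (6 * (p : ℤ) - 3))) := by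
  classical
  have hstd {T} (hT : IsTab2 k T) (hdom : ∀ lb, 0 ≤ m2 q T a lb) : T = stdTab k :=
    hT.eq_stdTab_of_m2Exp_nonneg (nonneg_of_coordMap_nonneg hq (by rwa [coordMap_m2Exp]))
  refine ⟨fun T hT => ⟨⟨fun hdom => eq_stdTab_iff.1 (hstd hT hdom), fun h => ?_⟩, fun h => ?_⟩,
    ?_, fun m hm hdom => ?_⟩
  · exact eq_stdTab_iff.2 h ▸ m2_stdTab_nonneg q k a
  · rw [eq_stdTab_iff.2 h, m2_stdTab]
  · rw [coeff_S2, ← m2_stdTab]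
    suffices Finset.univ.filter (fun T => IsTab2 k T ∧ m2 q T a = m2 q (stdTab k) a) =
        {stdTab k} by simp [this]
    ext T
    simp only [Finset.mem_filter, Finset.mem_univ, true_and, Finset.mem_singleton]
    refine ⟨fun ⟨hT, hm⟩ => hstd hT (hm ▸ m2_stdTab_nonneg q k a), ?_⟩
    rintro rfl
    exact ⟨isTab2_stdTab k, rfl⟩
  · rw [coeff_S2, Nat.cast_ne_zero, Finset.card_ne_zero] at hm
    obtain ⟨T, hT⟩ := hm
    obtain ⟨hTab, rfl⟩ := (Finset.mem_filter.1 hT).2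
    rw [hstd hTab hdom, m2_stdTab]

/-- `m^{(2)}_{T,a}` is dominant iff the first row of `T` is constant `1` and the second
row is constant `2`, in which case it is `∏_{p=1}^{k} Z_{2,a³q^{6p-9}}`; consequently the
sum `Σ_{T∈Tab(2,k)} m^{(2)}_{T,a}` has a unique dominant monomial, occurring with
coefficient `1` (the Kirillov–Reshetikhin module `W^{(2)}_{k,a}` of type `D₄⁽³⁾`
is special). -/
theorem W2_special (q : ℂˣ) (hq : ∀ n : ℕ, 0 < n → (q : ℂ) ^ n ≠ 1)
    (k : ℕ) (hk : 1 ≤ k) (a : ℂˣ) :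
    (∀ T : Fin 2 → Fin k → BB, IsTab2 k T →
      (((∀ lb : Fin 2 × ℂˣ, 0 ≤ (m2 q T a) lb) ↔
          ∀ p : Fin k, T 0 p = BB.b1 ∧ T 1 p = BB.b2) ∧
        ((∀ p : Fin k, T 0 p = BB.b1 ∧ T 1 p = BB.b2) →
          m2 q T a = ∑ p : Fin k, Zv 1 (a ^ 3 * q ^ (6 * (p : ℤ) - 3)))))
    ∧ (S2 q k a).coeff (∑ p : Fin k, Zv 1 (a ^ 3 * q ^ (6 * (p : ℤ) - 3))) = 1
    ∧ (∀ m : Mon2, (S2 q k a).coeff m ≠ 0 → (∀ lb : Fin 2 × ℂˣ, 0 ≤ m lb) →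
        m = ∑ p : Fin k, Zv 1 (a ^ 3 * q ^ (6 * (p : ℤ) - 3))) :=
  W2_special_general q hq k a
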